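/- If r satisfies the ψ-Poisson condition, then r is a morphism for the twisted bracket: r([ξ,η]_{r,ψ}) = [rξ, rη] for all ξ, η ∈ g*. (This is the base-a-point, Lie-algebra case of the Proposition that, for a bivector π satisfying the Poisson condition with background ψ, the map π♯ is a morphism of Lie algebroids from A* with the twisted bracket to A.) -/
import Mathlib


/-! If `r` satisfies the `ψ`-Poisson condition then `r` is a morphism for the twisted bracket. -/

section RMatrix

variable {K : Type*} [Field K] [CharZero K] {g : Type*} [LieRing g] [LieAlgebra K g]

/-- Coadjoint action: `(coad x ξ) y = −ξ ⁅x, y⁆`. -/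
def coad (x : g) (ξ : Module.Dual K g) : Module.Dual K g :=
  - (ξ ∘ₗ (LieAlgebra.ad K g x : g →ₗ[K] g))

/-- The bracket `[ξ,η]_r = ad*_{rξ} η − ad*_{rη} ξ` on `g*`. -/
def coBr (r : Module.Dual K g →ₗ[K] g) (ξ η : Module.Dual K g) : Module.Dual K g :=
  coad (r ξ) η - coad (r η) ξ

/-- The alternating trilinear form
`YB_r(ξ,η,ζ) = ζ⁅rξ,rη⁆ + ξ⁅rη,rζ⁆ + η⁅rζ,rξ⁆` on `g*`. -/
def YB (r : Module.Dual K g →ₗ[K] g) (ξ η ζ : Module.Dual K g) : K :=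
  ζ ⁅r ξ, r η⁆ + ξ ⁅r η, r ζ⁆ + η ⁅r ζ, r ξ⁆

/-- `ψ(x, y, ·) ∈ g*`, the linear form `z ↦ ψ (x, y, z)`. -/
noncomputable def psiHat (ψ : g [⋀^Fin 3]→ₗ[K] K) (x y : g) : Module.Dual K g :=
  ψ.toMultilinearMap.toLinearMap ![x, y, 0] 2

/-- The twisted bracket `[ξ,η]_{r,ψ} = [ξ,η]_r − ψ(rξ, rη, ·)` on `g*`. -/
noncomputable def twBr (r : Module.Dual K g →ₗ[K] g) (ψ : g [⋀^Fin 3]→ₗ[K] K)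
    (ξ η : Module.Dual K g) : Module.Dual K g :=
  coBr r ξ η - psiHat ψ (r ξ) (r η)

lemma psiHat_apply (ψ : g [⋀^Fin 3]→ₗ[K] K) (x y z : g) :
    psiHat ψ x y z = ψ ![x, y, z] := by
  have h : Function.update ![x, y, (0:g)] 2 z = ![x, y, z] := by
    funext i; fin_cases i <;> simp [Function.update]
  show ψ.toMultilinearMap (Function.update ![x, y, (0:g)] 2 z) = _
  rw [h]; rfl

/-- **If `r` satisfies the `ψ`-Poisson condition, `r` is a morphism for the
twisted bracket**: `r [ξ,η]_{r,ψ} = ⁅rξ, rη⁆`.  (Base-a-point case of: for a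
bivector `π` satisfying the Poisson condition with background `ψ`, the map `π♯`
is a morphism of Lie algebroids.) -/
theorem rMap_morphism_of_psiPoisson
    (r : Module.Dual K g →ₗ[K] g)
    (hskew : ∀ ξ η : Module.Dual K g, η (r ξ) = - ξ (r η))
    (ψ : g [⋀^Fin 3]→ₗ[K] K)
    (hpoisson : ∀ ξ η ζ : Module.Dual K g, YB r ξ η ζ = ψ ![r ξ, r η, r ζ]) :
    ∀ ξ η : Module.Dual K g, r (twBr r ψ ξ η) = ⁅r ξ, r η⁆ := by
  intro ξ η
  rw [← sub_eq_zero, ← Module.forall_dual_apply_eq_zero_iff K]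
  intro ζ
  have h1 : ζ (r (twBr r ψ ξ η)) = - (twBr r ψ ξ η) (r ζ) := hskew _ _
  have h2 : (twBr r ψ ξ η) (r ζ)
      = - η ⁅r ξ, r ζ⁆ + ξ ⁅r η, r ζ⁆ - ψ ![r ξ, r η, r ζ] := by
    simp [twBr, coBr, coad, psiHat_apply, LieAlgebra.ad_apply]
  have hp := hpoisson ξ η ζ
  unfold YB at hp
  have hsk : η ⁅r ζ, r ξ⁆ = - η ⁅r ξ, r ζ⁆ := by
    rw [← lie_skew (r ξ) (r ζ), map_neg, neg_neg]
  rw [map_sub, h1, h2, ← hp, hsk]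
  ring

end RMatrix
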